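/- Let H be a real Hilbert space, v₁, …, v_K ∈ H linearly independent, and let (P_N) be a sequence of orthogonal projections with P_N w → w for every w ∈ H (in particular P_N v_i → v_i for i = 1..K). Suppose u_N ∈ H with ‖u_N‖ = 1 and ⟨u_N, w⟩ → 0 for every fixed w ∈ H (u_N ⇀ 0 weakly). Then liminf_{N→∞} det( G_N ) > 0, where G_N is the (K+1)×(K+1) Gram matrix of the normalized vectors u_N, P_N v₁/‖P_N v₁‖, …, P_N v_K/‖P_N v_K‖. -/

import Mathlib

open Filter RealInnerProductSpace

open Matrix in
lemma gram_posDef {H : Type*} [NormedAddCommGroup H] [InnerProductSpace ℝ H]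
    {K : ℕ} (w : Fin K → H) (hw : LinearIndependent ℝ w) :
    (Matrix.of fun i j => (⟪w i, w j⟫ : ℝ)).PosDef := by
  refine Matrix.posDef_iff_dotProduct_mulVec.mpr ⟨?_, ?_⟩
  · ext i j
    simp [Matrix.conjTranspose, real_inner_comm]
  · intro x hx
    have key : star x ⬝ᵥ ((Matrix.of fun i j => (⟪w i, w j⟫ : ℝ)) *ᵥ x)
        = ⟪∑ i, x i • w i, ∑ j, x j • w j⟫ := by
      simp only [dotProduct, Matrix.mulVec, dotProduct, Matrix.of_apply,
        star_trivial, inner_sum, sum_inner, real_inner_smul_left, real_inner_smul_right]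
      rw [Finset.sum_comm]
      congr 1; ext i; rw [Finset.mul_sum]; congr 1; ext j; ring
    rw [key, real_inner_self_eq_norm_sq]
    have hne : ∑ i, x i • w i ≠ 0 := by
      intro h
      exact hx (funext fun i => Fintype.linearIndependent_iff.mp hw x h i)
    exact pow_pos (norm_pos_iff.mpr hne) 2


/-- Geometric core of the determinant-rate lemma: let `u_N` be unit vectors converging
weakly to `0`, let `P_N` be orthogonal projections converging strongly to the identity, and
let `v₁, …, v_K` be linearly independent. Then the `(K+1)×(K+1)` Gram determinant of the
normalized vectors `u_N, P_N v₁/‖P_N v₁‖, …, P_N v_K/‖P_N v_K‖` has strictly positive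
liminf. -/
theorem stmt11 {H : Type*} [NormedAddCommGroup H] [InnerProductSpace ℝ H]
    (K : ℕ) (v : Fin K → H) (hv : LinearIndependent ℝ v)
    (P : ℕ → H →ₗ[ℝ] H)
    (hPsym : ∀ N x y, ⟪P N x, y⟫ = ⟪x, P N y⟫)
    (hPidem : ∀ N x, P N (P N x) = P N x)
    (hPstrong : ∀ w : H, Tendsto (fun N => P N w) atTop (nhds w))
    (u : ℕ → H) (hu : ∀ N, ‖u N‖ = 1)
    (huweak : ∀ w : H, Tendsto (fun N => ⟪u N, w⟫) atTop (nhds 0)) :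
    0 < liminf (fun N =>
      (Matrix.of fun i j : Fin (K + 1) =>
        ⟪(Fin.cons (u N) (fun i' : Fin K => ‖P N (v i')‖⁻¹ • P N (v i')) : Fin (K + 1) → H) i,
          (Fin.cons (u N) (fun i' : Fin K => ‖P N (v i')‖⁻¹ • P N (v i')) : Fin (K + 1) → H) j⟫).det) atTop := by
  have hvne : ∀ i, v i ≠ 0 := fun i => hv.ne_zero i
  set wl : Fin K → H := fun i => ‖v i‖⁻¹ • v i with hwl_def
  have hwl : LinearIndependent ℝ wl := by
    have := hv.units_smul (fun i => Units.mk0 (‖v i‖⁻¹)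
      (inv_ne_zero (norm_ne_zero_iff.mpr (hvne i))))
    convert this using 1
    ext i; rfl
  set wN : ℕ → Fin K → H := fun N i => ‖P N (v i)‖⁻¹ • P N (v i) with hwNdef
  have hwN : ∀ i, Tendsto (fun N => wN N i) atTop (nhds (wl i)) := by
    intro i
    have hP := hPstrong (v i)
    exact ((hP.norm.inv₀ (norm_ne_zero_iff.mpr (hvne i)))).smul hP
  set M : ℕ → Matrix (Fin (K + 1)) (Fin (K + 1)) ℝ := fun N =>
    Matrix.of fun i j : Fin (K + 1) =>
      ⟪(Fin.cons (u N) (wN N) : Fin (K + 1) → H) i,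
        (Fin.cons (u N) (wN N) : Fin (K + 1) → H) j⟫ with hMdef
  set L : Matrix (Fin (K + 1)) (Fin (K + 1)) ℝ :=
    Matrix.of (Fin.cons (Fin.cons 1 (fun _ => 0))
      (fun i => Fin.cons 0 (fun j => ⟪wl i, wl j⟫))) with hLdef
  -- convergence of inner products against u
  have huinner : ∀ i, Tendsto (fun N => (⟪u N, wN N i⟫ : ℝ)) atTop (nhds 0) := by
    intro i
    have h1 : Tendsto (fun N => (⟪u N, wN N i - wl i⟫ : ℝ)) atTop (nhds 0) := by
      refine squeeze_zero_norm (fun N => ?_) (tendsto_iff_norm_sub_tendsto_zero.mp (hwN i))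
      · calc ‖(⟪u N, wN N i - wl i⟫ : ℝ)‖ = |(⟪u N, wN N i - wl i⟫ : ℝ)| := rfl
          _ ≤ ‖u N‖ * ‖wN N i - wl i‖ := abs_real_inner_le_norm _ _
          _ = ‖wN N i - wl i‖ := by rw [hu N, one_mul]
    have h2 := huweak (wl i)
    have : (fun N => (⟪u N, wN N i⟫ : ℝ))
        = fun N => (⟪u N, wN N i - wl i⟫ : ℝ) + ⟪u N, wl i⟫ := by
      funext N; rw [inner_sub_right]; ring
    rw [this]
    simpa using h1.add h2
  have hM : Tendsto M atTop (nhds L) := by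
    refine tendsto_pi_nhds.mpr fun i => tendsto_pi_nhds.mpr fun j => ?_
    refine Fin.cases ?_ ?_ i <;> [skip; intro i'] <;>
      (refine Fin.cases ?_ ?_ j <;> [skip; intro j'])
    · have : (fun N => M N 0 0) = fun _ => (1 : ℝ) := by
        funext N
        simp only [hMdef, Matrix.of_apply, Fin.cons_zero]
        rw [real_inner_self_eq_norm_sq, hu N, one_pow]
      rw [this]
      simpa [hLdef] using tendsto_const_nhds
    · simpa [hMdef, hLdef] using huinner j'
    · have : (fun N => M N i'.succ 0) = fun N => (⟪u N, wN N i'⟫ : ℝ) := by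
        funext N
        simp only [hMdef, Matrix.of_apply, Fin.cons_zero, Fin.cons_succ]
        exact real_inner_comm _ _
      rw [this]
      simpa [hLdef] using huinner i'
    · simpa [hMdef, hLdef] using (hwN i').inner (hwN j')
  have hdet : Tendsto (fun N => (M N).det) atTop (nhds L.det) :=
    (continuous_id.matrix_det.tendsto L).comp hM
  have hL : L.det = (Matrix.of fun i j => (⟪wl i, wl j⟫ : ℝ)).det := by
    rw [Matrix.det_succ_row_zero, Fin.sum_univ_succ]
    simp [hLdef, Matrix.submatrix, Fin.succAbove]
  have hpos : 0 < L.det := by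
    rw [hL]
    exact (gram_posDef wl hwl).det_pos
  have := hdet.liminf_eq
  rw [this]
  exact hpos
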